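/- For the angular momentum operators, the Bessel–Fischer product satisfies ⟨L_{ij} p, q⟩_B = −⟨p, L_{ij} q⟩_B for i, j ∈ {1,…,m−1} and ⟨L_{0i} p, q⟩_B = ⟨p, L_{0i} q⟩_B for i ∈ {1,…,m−1}, for all polynomials p, q in ℂ[z_0,…,z_{m−1}]. -/

import Mathlib

open MvPolynomial

noncomputable section

/-- Complex polynomials in the variables `z_0, …, z_{m−1}`. -/
abbrev Pm (m : ℕ) := MvPolynomial (Fin m) ℂ

/-- The diagonal entries of the bilinear form `β`: `β_{00} = −1`, `β_{kk} = 1` for `k ≥ 1`. -/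
def sgn (m : ℕ) (i : Fin m) : ℂ := if (i : ℕ) = 0 then -1 else 1

/-- The plain partial derivative `∂^i` as a linear operator. -/
def DOp (m : ℕ) (i : Fin m) : Module.End ℂ (Pm m) := (pderiv i).toLinearMap

/-- The lowered partial derivative `∂_i = ∑_k β_{ik} ∂^k`. -/
def dlow (m : ℕ) (i : Fin m) : Module.End ℂ (Pm m) := sgn m i • DOp m i

/-- Multiplication by the variable `z_i`. -/
def mulX (m : ℕ) (i : Fin m) : Module.End ℂ (Pm m) := LinearMap.mulLeft ℂ (X i)

/-- The Euler operator `E = ∑_{i,j} β^{ij} z_i ∂_j`. -/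
def EOp (m : ℕ) : Module.End ℂ (Pm m) := ∑ i, sgn m i • (mulX m i * dlow m i)

/-- The Laplacian `Δ = ∑_{i,j} β^{ij} ∂_i ∂_j`. -/
def LapOp (m : ℕ) : Module.End ℂ (Pm m) := ∑ i, sgn m i • (dlow m i * dlow m i)

/-- The Bessel operator `B(z_i) = (m − 2 + 2E)∂_i − z_i Δ` (parameter `λ = 2 − m`). -/
def BOp (m : ℕ) (i : Fin m) : Module.End ℂ (Pm m) :=
  (((m : ℂ) - 2) • (1 : Module.End ℂ (Pm m)) + (2 : ℂ) • EOp m) * dlow m i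
    - mulX m i * LapOp m

/-- The modified Bessel operator: `B̃(z_0) = −B(z_0)`, `B̃(z_k) = B(z_k)` for `k ≥ 1`. -/
def BtOp (m : ℕ) (i : Fin m) : Module.End ℂ (Pm m) := sgn m i • BOp m i

/-- The Bessel–Fischer product `⟨p,q⟩_B := (p(B̃) q̄)(0)`: substitute the modified
Bessel operators for the variables of `p`, apply to the coefficient-conjugate of `q`,
and evaluate at `0`. -/
def BF (m : ℕ) (p q : Pm m) : ℂ :=
  eval (0 : Fin m → ℂ)
    (((∑ α ∈ p.support, p.coeff α • (List.ofFn fun i : Fin m => (BtOp m i) ^ (α i)).prod) :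
        Module.End ℂ (Pm m)) (map (starRingEnd ℂ) q))

/-- The angular momentum operator `L_{ij} = z_i ∂_j − z_j ∂_i`. -/
def LOp (m : ℕ) (i j : Fin m) : Module.End ℂ (Pm m) :=
  mulX m i * dlow m j - mulX m j * dlow m i

/-- The squared radial coordinate `R² = ∑_{i,j} β^{ij} z_i z_j`. -/
def R2 (m : ℕ) : Pm m := ∑ i, sgn m i • (X i * X i)

/-!
The modified Bessel operators `B̃(z_k)` pairwise commute, so `p ↦ p(B̃)` is an algebra map `Φ`
and `⟨p, q⟩_B = (Φ(p) q̄)(0)`. The operator `L_{ij}` is a derivation of the polynomial ring that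
commutes with `E` and `Δ`; the canonical commutation relations then give
`sgn i sgn j [L_{ij}, B̃(z_k)] = Φ(L_{ij} z_k)`, hence `Φ(L_{ij} p) = sgn i sgn j [L_{ij}, Φ(p)]`
for every polynomial `p`. As `L_{ij}` commutes with conjugating coefficients and every polynomial
in its image vanishes at `0`, this yields `⟨L_{ij} p, q⟩_B = -sgn i sgn j ⟨p, L_{ij} q⟩_B`.
-/

theorem MvPolynomial.pderiv_pderiv_comm {R σ : Type*} [CommRing R] (i j : σ)
    (p : MvPolynomial σ R) : pderiv i (pderiv j p) = pderiv j (pderiv i p) := by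
  have h : ⁅pderiv i, pderiv j⁆ = (0 : Derivation R (MvPolynomial σ R) (MvPolynomial σ R)) :=
    derivation_ext fun k => by
      rw [Derivation.commutator_apply]
      classical simp [pderiv_X, Pi.single_apply, apply_ite]
  rw [← sub_eq_zero, ← Derivation.commutator_apply, h, Derivation.zero_apply]

/-- A plain commutator: Mathlib's `⁅a, b⁆` on `Module.End ℂ (Pm m)` elaborates through the Lie
action on linear maps, and the general Lie-algebra lemmas do not rewrite it. -/
def ringCommutator {A : Type*} [Ring A] (a b : A) : A := a * b - b * a

local notation "⟦" a ", " b "⟧" => ringCommutator a b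

namespace ringCommutator

variable {A : Type*} [Ring A]

theorem mul_left (a b c : A) : ⟦a * b, c⟧ = a * ⟦b, c⟧ + ⟦a, c⟧ * b := by
  simp only [ringCommutator, mul_sub, sub_mul, mul_assoc]; abel

theorem mul_right (a b c : A) : ⟦a, b * c⟧ = ⟦a, b⟧ * c + b * ⟦a, c⟧ := by
  simp only [ringCommutator, mul_sub, sub_mul, mul_assoc]; abel

theorem add_left (a b c : A) : ⟦a + b, c⟧ = ⟦a, c⟧ + ⟦b, c⟧ := by
  simp only [ringCommutator, add_mul, mul_add]; abel

theorem add_right (a b c : A) : ⟦a, b + c⟧ = ⟦a, b⟧ + ⟦a, c⟧ := by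
  simp only [ringCommutator, add_mul, mul_add]; abel

theorem sub_left (a b c : A) : ⟦a - b, c⟧ = ⟦a, c⟧ - ⟦b, c⟧ := by
  simp only [ringCommutator, sub_mul, mul_sub]; abel

theorem sub_right (a b c : A) : ⟦a, b - c⟧ = ⟦a, b⟧ - ⟦a, c⟧ := by
  simp only [ringCommutator, sub_mul, mul_sub]; abel

theorem self (a : A) : ⟦a, a⟧ = 0 := sub_self _

theorem one_left (a : A) : ⟦1, a⟧ = 0 := by rw [ringCommutator, one_mul, mul_one, sub_self]

theorem one_right (a : A) : ⟦a, 1⟧ = 0 := by rw [ringCommutator, one_mul, mul_one, sub_self]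

theorem sum_left {ι : Type*} (s : Finset ι) (f : ι → A) (b : A) :
    ⟦∑ i ∈ s, f i, b⟧ = ∑ i ∈ s, ⟦f i, b⟧ := by
  simp only [ringCommutator, Finset.sum_mul, Finset.mul_sum, Finset.sum_sub_distrib]

theorem sum_right {ι : Type*} (s : Finset ι) (a : A) (f : ι → A) :
    ⟦a, ∑ i ∈ s, f i⟧ = ∑ i ∈ s, ⟦a, f i⟧ := by
  simp only [ringCommutator, Finset.sum_mul, Finset.mul_sum, Finset.sum_sub_distrib]

theorem algebraMap_right {R : Type*} [CommRing R] [Algebra R A] (a : A) (t : R) :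
    ⟦a, algebraMap R A t⟧ = 0 := by
  rw [ringCommutator, Algebra.commutes, sub_self]

-- The sign is kept on the scalar: negations of endomorphisms of `Pm m` reach the goal through
-- two instance paths that `rw` and `module` do not identify.
theorem eq_neg_smul_of_swap {R : Type*} [Ring R] [Module R A] {a b x : A} {c : R}
    (h : ⟦b, a⟧ = c • x) : ⟦a, b⟧ = -c • x := by
  rw [neg_smul, ← h, ringCommutator, ringCommutator, neg_sub]

variable {R : Type*} [Monoid R] [DistribMulAction R A] [IsScalarTower R A A] [SMulCommClass R A A]

theorem smul_left (t : R) (a b : A) : ⟦t • a, b⟧ = t • ⟦a, b⟧ := by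
  rw [ringCommutator, ringCommutator, smul_mul_assoc, mul_smul_comm, smul_sub]

theorem smul_right (t : R) (a b : A) : ⟦a, t • b⟧ = t • ⟦a, b⟧ := by
  rw [ringCommutator, ringCommutator, smul_mul_assoc, mul_smul_comm, smul_sub]

end ringCommutator

theorem MvPolynomial.algHom_derivation_eq_commutator {R σ A : Type*} [CommRing R] [Ring A]
    [Algebra R A] (Φ : MvPolynomial σ R →ₐ[R] A)
    (D : Derivation R (MvPolynomial σ R) (MvPolynomial σ R)) (a : A)
    (hX : ∀ k, Φ (D (X k)) = ⟦a, Φ (X k)⟧) (p : MvPolynomial σ R) :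
    Φ (D p) = ⟦a, Φ p⟧ := by
  induction p using MvPolynomial.induction_on with
  | C c =>
    rw [← algebraMap_eq, Derivation.map_algebraMap, map_zero, AlgHom.commutes,
      ringCommutator.algebraMap_right]
  | add p q hp hq => rw [map_add, map_add, hp, hq, map_add, ringCommutator.add_right]
  | mul_X p k hp =>
    rw [Derivation.leibniz, smul_eq_mul, smul_eq_mul, map_add, map_mul, mul_comm (X k),
      map_mul, hX, hp, map_mul, ringCommutator.mul_right, add_comm]

/-- The bilinear form `β_{ij}` of the paper. -/
def beta (m : ℕ) (i j : Fin m) : ℂ := if i = j then sgn m i else 0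

section Metric

variable {m : ℕ}

theorem sgn_zero [NeZero m] : sgn m 0 = -1 := if_pos (Fin.val_zero m)

theorem sgn_of_ne_zero {i : Fin m} (hi : (i : ℕ) ≠ 0) : sgn m i = 1 := if_neg hi

theorem sgn_mul_self (i : Fin m) : sgn m i * sgn m i = 1 := by
  unfold sgn; split_ifs <;> norm_num

theorem conj_sgn (i : Fin m) : starRingEnd ℂ (sgn m i) = sgn m i := by
  unfold sgn; split_ifs <;> simp

theorem beta_comm (i j : Fin m) : beta m i j = beta m j i := by
  unfold beta; split_ifs with h h' h' <;> simp_all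

theorem sum_sgn_mul_beta_smul {M : Type*} [AddCommMonoid M] [Module ℂ M] (j : Fin m)
    (f : Fin m → M) : ∑ k, (sgn m k * beta m k j) • f k = f j := by
  simp only [beta, mul_ite, mul_zero, ite_smul, zero_smul, Finset.sum_ite_eq',
    Finset.mem_univ, if_true, sgn_mul_self, one_smul]

end Metric

section CanonicalCommutation

variable {m : ℕ}

theorem commutator_dlow_mulX (i j : Fin m) : ⟦dlow m i, mulX m j⟧ = beta m i j • 1 := by
  refine LinearMap.ext fun p => ?_
  simp only [ringCommutator, dlow, DOp, mulX, beta, LinearMap.sub_apply, Module.End.mul_apply,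
    LinearMap.mulLeft_apply, LinearMap.smul_apply, Module.End.one_apply,
    Derivation.coeFn_coe, Derivation.leibniz, pderiv_X, Pi.single_apply, smul_eq_mul]
  split_ifs <;> simp_all [eq_comm]

theorem commutator_mulX_dlow (i j : Fin m) : ⟦mulX m i, dlow m j⟧ = -beta m j i • 1 :=
  ringCommutator.eq_neg_smul_of_swap (commutator_dlow_mulX j i)

theorem dlow_mul_comm (i j : Fin m) : dlow m i * dlow m j = dlow m j * dlow m i := by
  refine LinearMap.ext fun p => ?_
  simp only [dlow, DOp, smul_mul_smul_comm, mul_comm (sgn m i), LinearMap.smul_apply,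
    Module.End.mul_apply, Derivation.coeFn_coe, pderiv_pderiv_comm]

theorem commutator_dlow_dlow (i j : Fin m) : ⟦dlow m i, dlow m j⟧ = 0 := by
  rw [ringCommutator, dlow_mul_comm, sub_self]

theorem commutator_mulX_mulX (i j : Fin m) : ⟦mulX m i, mulX m j⟧ = 0 := by
  refine LinearMap.ext fun p => ?_
  simp only [ringCommutator, mulX, LinearMap.sub_apply, Module.End.mul_apply,
    LinearMap.mulLeft_apply, LinearMap.zero_apply]
  ring

end CanonicalCommutation

def shiftedEuler (m : ℕ) : Module.End ℂ (Pm m) := ((m : ℂ) - 2) • 1 + (2 : ℂ) • EOp m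

section EulerLaplace

variable {m : ℕ}

theorem commutator_EOp_mulX (k : Fin m) : ⟦EOp m, mulX m k⟧ = mulX m k := by
  simp only [EOp, ringCommutator.sum_left, ringCommutator.smul_left, ringCommutator.mul_left,
    commutator_dlow_mulX, commutator_mulX_mulX, mul_smul_comm,
    mul_one, zero_mul, add_zero, smul_smul, sum_sgn_mul_beta_smul]

theorem commutator_EOp_dlow (k : Fin m) : ⟦EOp m, dlow m k⟧ = -dlow m k := by
  simp only [EOp, ringCommutator.sum_left, ringCommutator.smul_left, ringCommutator.mul_left,
    commutator_dlow_dlow, commutator_mulX_dlow, mul_zero, zero_add, smul_mul_assoc, one_mul,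
    smul_smul, beta_comm k, mul_neg, neg_smul, Finset.sum_neg_distrib, sum_sgn_mul_beta_smul]

theorem commutator_LapOp_mulX (k : Fin m) : ⟦LapOp m, mulX m k⟧ = (2 : ℂ) • dlow m k := by
  simp only [LapOp, ringCommutator.sum_left, ringCommutator.smul_left, ringCommutator.mul_left,
    commutator_dlow_mulX, mul_smul_comm, smul_mul_assoc, mul_one, one_mul]
  rw [← sum_sgn_mul_beta_smul k (dlow m), Finset.smul_sum]
  refine Finset.sum_congr rfl fun i _ => ?_
  module

theorem commutator_LapOp_dlow (k : Fin m) : ⟦LapOp m, dlow m k⟧ = 0 := by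
  simp only [LapOp, ringCommutator.sum_left, ringCommutator.smul_left, ringCommutator.mul_left,
    commutator_dlow_dlow, mul_zero, zero_mul, add_zero, smul_zero, Finset.sum_const_zero]

theorem commutator_LapOp_EOp : ⟦LapOp m, EOp m⟧ = (2 : ℂ) • LapOp m := by
  simp only [EOp, ringCommutator.sum_right, ringCommutator.smul_right, ringCommutator.mul_right,
    commutator_LapOp_mulX, commutator_LapOp_dlow, mul_zero, add_zero, smul_mul_assoc]
  rw [LapOp, Finset.smul_sum]
  simp only [smul_comm (2 : ℂ)]

theorem commutator_shiftedEuler_mulX (k : Fin m) :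
    ⟦shiftedEuler m, mulX m k⟧ = (2 : ℂ) • mulX m k := by
  rw [shiftedEuler, ringCommutator.add_left, ringCommutator.smul_left, ringCommutator.smul_left,
    commutator_EOp_mulX, ringCommutator.one_left, smul_zero, zero_add]

theorem commutator_shiftedEuler_dlow (k : Fin m) :
    ⟦shiftedEuler m, dlow m k⟧ = (-2 : ℂ) • dlow m k := by
  rw [shiftedEuler, ringCommutator.add_left, ringCommutator.smul_left, ringCommutator.smul_left,
    commutator_EOp_dlow, ringCommutator.one_left, smul_zero, zero_add]
  module

theorem commutator_LapOp_shiftedEuler : ⟦LapOp m, shiftedEuler m⟧ = (4 : ℂ) • LapOp m := by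
  rw [shiftedEuler, ringCommutator.add_right, ringCommutator.smul_right,
    ringCommutator.smul_right, commutator_LapOp_EOp, ringCommutator.one_right, smul_smul]
  module

theorem LapOp_mul_dlow (k : Fin m) : LapOp m * dlow m k = dlow m k * LapOp m :=
  sub_eq_zero.mp (commutator_LapOp_dlow k)

theorem commutator_dlow_LapOp (k : Fin m) : ⟦dlow m k, LapOp m⟧ = 0 :=
  sub_eq_zero.mpr (LapOp_mul_dlow k).symm

theorem commutator_mulX_LapOp (k : Fin m) : ⟦mulX m k, LapOp m⟧ = (-2 : ℂ) • dlow m k :=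
  ringCommutator.eq_neg_smul_of_swap (commutator_LapOp_mulX k)

theorem commutator_mulX_shiftedEuler (k : Fin m) :
    ⟦mulX m k, shiftedEuler m⟧ = (-2 : ℂ) • mulX m k :=
  ringCommutator.eq_neg_smul_of_swap (commutator_shiftedEuler_mulX k)

theorem commutator_dlow_shiftedEuler (k : Fin m) :
    ⟦dlow m k, shiftedEuler m⟧ = (2 : ℂ) • dlow m k := by
  simpa using ringCommutator.eq_neg_smul_of_swap (commutator_shiftedEuler_dlow k)

theorem commutator_shiftedEuler_LapOp : ⟦shiftedEuler m, LapOp m⟧ = (-4 : ℂ) • LapOp m :=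
  ringCommutator.eq_neg_smul_of_swap commutator_LapOp_shiftedEuler

end EulerLaplace

section AngularMomentum

variable {m : ℕ}

theorem commutator_LOp_mulX (i j k : Fin m) :
    ⟦LOp m i j, mulX m k⟧ = beta m k j • mulX m i - beta m k i • mulX m j := by
  rw [LOp, ringCommutator.sub_left, ringCommutator.mul_left, ringCommutator.mul_left,
    commutator_mulX_mulX, commutator_mulX_mulX, commutator_dlow_mulX, commutator_dlow_mulX,
    beta_comm j, beta_comm i]
  simp only [zero_mul, add_zero, mul_smul_comm, mul_one]

theorem commutator_LOp_dlow (i j k : Fin m) :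
    ⟦LOp m i j, dlow m k⟧ = beta m k j • dlow m i - beta m k i • dlow m j := by
  rw [LOp, ringCommutator.sub_left, ringCommutator.mul_left, ringCommutator.mul_left,
    commutator_dlow_dlow, commutator_dlow_dlow, commutator_mulX_dlow, commutator_mulX_dlow]
  simp only [mul_zero, zero_add, smul_mul_assoc, one_mul]
  module

theorem commutator_LOp_EOp (i j : Fin m) : ⟦LOp m i j, EOp m⟧ = 0 := by
  simp only [EOp, ringCommutator.sum_right, ringCommutator.smul_right, ringCommutator.mul_right,
    commutator_LOp_mulX, commutator_LOp_dlow, sub_mul, mul_sub, smul_mul_assoc, mul_smul_comm,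
    smul_add, smul_sub, smul_smul, Finset.sum_add_distrib, Finset.sum_sub_distrib,
    sum_sgn_mul_beta_smul]
  abel

theorem commutator_LOp_LapOp (i j : Fin m) : ⟦LOp m i j, LapOp m⟧ = 0 := by
  simp only [LapOp, ringCommutator.sum_right, ringCommutator.smul_right, ringCommutator.mul_right,
    commutator_LOp_dlow, sub_mul, mul_sub, smul_mul_assoc, mul_smul_comm,
    smul_add, smul_sub, smul_smul, Finset.sum_add_distrib, Finset.sum_sub_distrib,
    sum_sgn_mul_beta_smul, dlow_mul_comm j i]
  abel

theorem commutator_LOp_shiftedEuler (i j : Fin m) : ⟦LOp m i j, shiftedEuler m⟧ = 0 := by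
  rw [shiftedEuler, ringCommutator.add_right, ringCommutator.smul_right,
    ringCommutator.smul_right, commutator_LOp_EOp, ringCommutator.one_right, smul_zero,
    smul_zero, add_zero]

theorem BOp_eq (i : Fin m) : BOp m i = shiftedEuler m * dlow m i - mulX m i * LapOp m := rfl

theorem commutator_LOp_BOp (i j k : Fin m) :
    ⟦LOp m i j, BOp m k⟧ = beta m k j • BOp m i - beta m k i • BOp m j := by
  simp only [BOp_eq, ringCommutator.sub_right, ringCommutator.mul_right,
    commutator_LOp_shiftedEuler, commutator_LOp_LapOp, commutator_LOp_dlow, commutator_LOp_mulX,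
    zero_mul, zero_add, mul_zero, add_zero, mul_sub, sub_mul, mul_smul_comm, smul_mul_assoc,
    smul_sub]
  abel

theorem sgn_mul_beta (k j : Fin m) : sgn m k * beta m k j = sgn m j * beta m k j := by
  unfold beta; split_ifs with h <;> simp [h]

theorem commutator_LOp_BtOp (i j k : Fin m) :
    ⟦LOp m i j, BtOp m k⟧ =
      (sgn m i * sgn m j) • (beta m k j • BtOp m i - beta m k i • BtOp m j) := by
  simp only [BtOp, ringCommutator.smul_right, commutator_LOp_BOp, smul_sub, smul_smul]
  rw [sgn_mul_beta k j, sgn_mul_beta k i]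
  congr 2
  · linear_combination -(sgn m j * beta m k j) * sgn_mul_self i
  · linear_combination -(sgn m i * beta m k i) * sgn_mul_self j

end AngularMomentum

section BesselCommute

variable {m : ℕ}

theorem commutator_BOp_shiftedEuler (k : Fin m) :
    ⟦BOp m k, shiftedEuler m⟧ = (2 : ℂ) • BOp m k := by
  rw [BOp_eq, ringCommutator.sub_left, ringCommutator.mul_left, ringCommutator.mul_left,
    ringCommutator.self, commutator_dlow_shiftedEuler, commutator_mulX_shiftedEuler,
    commutator_LapOp_shiftedEuler]
  simp only [smul_mul_assoc, mul_smul_comm, zero_mul, smul_sub]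
  module

theorem commutator_BOp_dlow (k l : Fin m) :
    ⟦BOp m k, dlow m l⟧ = (-2 : ℂ) • (dlow m l * dlow m k) + beta m l k • LapOp m := by
  rw [BOp_eq, ringCommutator.sub_left, ringCommutator.mul_left, ringCommutator.mul_left,
    commutator_dlow_dlow, commutator_shiftedEuler_dlow, commutator_LapOp_dlow,
    commutator_mulX_dlow]
  simp only [smul_mul_assoc, one_mul, mul_zero]
  module

theorem commutator_BOp_mulX (k l : Fin m) :
    ⟦BOp m k, mulX m l⟧ = beta m k l • shiftedEuler m - (2 : ℂ) • LOp m k l := by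
  rw [BOp_eq, ringCommutator.sub_left, ringCommutator.mul_left, ringCommutator.mul_left,
    commutator_dlow_mulX, commutator_shiftedEuler_mulX, commutator_LapOp_mulX,
    commutator_mulX_mulX, LOp]
  simp only [smul_mul_assoc, mul_smul_comm, mul_one, zero_mul]
  module

theorem commutator_BOp_LapOp (k : Fin m) :
    ⟦BOp m k, LapOp m⟧ = (-2 : ℂ) • (dlow m k * LapOp m) := by
  rw [BOp_eq, ringCommutator.sub_left, ringCommutator.mul_left, ringCommutator.mul_left,
    ringCommutator.self, commutator_dlow_LapOp, commutator_mulX_LapOp,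
    commutator_shiftedEuler_LapOp]
  simp only [smul_mul_assoc, mul_zero, LapOp_mul_dlow]
  module

theorem commutator_BOp_BOp (k l : Fin m) : ⟦BOp m k, BOp m l⟧ = 0 := by
  rw [BOp_eq l, ringCommutator.sub_right, ringCommutator.mul_right, ringCommutator.mul_right,
    commutator_BOp_shiftedEuler, commutator_BOp_dlow, commutator_BOp_mulX, commutator_BOp_LapOp,
    BOp_eq, LOp, beta_comm l k, dlow_mul_comm l k]
  simp only [sub_mul, mul_add, smul_mul_assoc, mul_smul_comm, mul_assoc, LapOp_mul_dlow]
  module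

theorem BtOp_commute (k l : Fin m) : Commute (BtOp m k) (BtOp m l) := by
  have h : Commute (BOp m k) (BOp m l) := sub_eq_zero.mp (commutator_BOp_BOp k l)
  exact (h.smul_right _).smul_left _

end BesselCommute

section BesselFischer

variable {m : ℕ}

def besselAlgebra (m : ℕ) : Subalgebra ℂ (Module.End ℂ (Pm m)) :=
  Algebra.adjoin ℂ (Set.range (BtOp m))

instance (m : ℕ) : IsMulCommutative (besselAlgebra m) :=
  Algebra.isMulCommutative_adjoin ℂ (by rintro _ ⟨k, rfl⟩ _ ⟨l, rfl⟩; exact BtOp_commute k l)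

open scoped IsMulCommutative in
def besselEval (m : ℕ) : Pm m →ₐ[ℂ] Module.End ℂ (Pm m) :=
  (besselAlgebra m).val.comp (aeval fun k => ⟨BtOp m k, Algebra.subset_adjoin ⟨k, rfl⟩⟩)

theorem besselEval_X (k : Fin m) : besselEval m (X k) = BtOp m k := by
  simp [besselEval]

theorem besselEval_monomial (α : Fin m →₀ ℕ) (c : ℂ) :
    besselEval m (monomial α c) = c • (List.ofFn fun i => BtOp m i ^ α i).prod := by
  rw [monomial_eq, Finsupp.prod_fintype _ _ fun _ => pow_zero _, ← List.prod_ofFn, map_mul,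
    map_list_prod, List.map_ofFn, ← algebraMap_eq, AlgHom.commutes,
    Algebra.algebraMap_eq_smul_one, smul_mul_assoc, one_mul]
  simp only [Function.comp_def, map_pow, besselEval_X]

theorem BF_eq_eval_besselEval (p q : Pm m) :
    BF m p q = eval 0 (besselEval m p (map (starRingEnd ℂ) q)) := by
  rw [BF]
  congr 2
  conv_rhs => rw [p.as_sum]
  rw [map_sum]
  exact Finset.sum_congr rfl fun α _ => (besselEval_monomial α _).symm

def LDer (m : ℕ) (i j : Fin m) : Derivation ℂ (Pm m) (Pm m) :=
  (sgn m j • X i : Pm m) • pderiv j - (sgn m i • X j : Pm m) • pderiv i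

theorem LDer_apply (i j : Fin m) (p : Pm m) : LDer m i j p = LOp m i j p := by
  simp only [LDer, LOp, dlow, DOp, mulX, Derivation.sub_apply, Derivation.smul_apply,
    LinearMap.sub_apply, Module.End.mul_apply, LinearMap.smul_apply, Derivation.coeFn_coe,
    LinearMap.mulLeft_apply, smul_eq_mul, smul_mul_assoc, mul_smul_comm]

theorem LOp_X (i j k : Fin m) : LOp m i j (X k) = beta m k j • X i - beta m k i • X j := by
  simp only [← LDer_apply, LDer, Derivation.sub_apply, Derivation.smul_apply, pderiv_X,
    Pi.single_apply, beta, smul_eq_mul]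
  split_ifs <;> simp_all

theorem besselEval_LOp (i j : Fin m) (p : Pm m) :
    besselEval m (LOp m i j p) = (sgn m i * sgn m j) • ⟦LOp m i j, besselEval m p⟧ := by
  rw [← LDer_apply, ← ringCommutator.smul_left]
  refine MvPolynomial.algHom_derivation_eq_commutator _ _ _ (fun k => ?_) p
  rw [LDer_apply, LOp_X, map_sub, map_smul, map_smul, besselEval_X, besselEval_X, besselEval_X,
    ringCommutator.smul_left, commutator_LOp_BtOp, smul_smul, mul_mul_mul_comm, sgn_mul_self,
    sgn_mul_self, one_mul, one_smul]

theorem eval_zero_LOp (i j : Fin m) (p : Pm m) : eval 0 (LOp m i j p) = 0 := by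
  simp [← LDer_apply, LDer]

theorem map_conj_LOp (i j : Fin m) (p : Pm m) :
    map (starRingEnd ℂ) (LOp m i j p) = LOp m i j (map (starRingEnd ℂ) p) := by
  simp [← LDer_apply, LDer, smul_eq_C_mul, pderiv_map, conj_sgn]

theorem BF_LOp_left (i j : Fin m) (p q : Pm m) :
    BF m (LOp m i j p) q = -(sgn m i * sgn m j) * BF m p (LOp m i j q) := by
  rw [BF_eq_eval_besselEval, BF_eq_eval_besselEval, besselEval_LOp, LinearMap.smul_apply,
    smul_eval, ringCommutator, LinearMap.sub_apply, Module.End.mul_apply, Module.End.mul_apply,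
    map_sub, eval_zero_LOp, zero_sub, map_conj_LOp]
  ring

end BesselFischer

/-- `⟨L_{ij} p, q⟩_B = −⟨p, L_{ij} q⟩_B` for `i, j ∈ {1,…,m−1}` and
`⟨L_{0i} p, q⟩_B = ⟨p, L_{0i} q⟩_B` for `i ∈ {1,…,m−1}`. -/
theorem stmt12 (m : ℕ) [NeZero m] :
    (∀ i j : Fin m, (i : ℕ) ≠ 0 → (j : ℕ) ≠ 0 → ∀ p q : Pm m,
      BF m (LOp m i j p) q = - BF m p (LOp m i j q)) ∧
    (∀ i : Fin m, (i : ℕ) ≠ 0 → ∀ p q : Pm m,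
      BF m (LOp m 0 i p) q = BF m p (LOp m 0 i q)) := by
  refine ⟨fun i j hi hj p q => ?_, fun i hi p q => ?_⟩
  · rw [BF_LOp_left, sgn_of_ne_zero hi, sgn_of_ne_zero hj]
    ring
  · rw [BF_LOp_left, sgn_zero, sgn_of_ne_zero hi]
    ring
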